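/- arXiv:0907.1618 — 2 statements merged into one kernel-verified Lean document; each statement's English description precedes it below -/
import Mathlib

section
/- Let H ∈ (1/2, 1), B^H a fractional Brownian motion on [0,T], {θ_n} a sequence of partitions with mesh |θ_n| → 0, and A^{θ_n} the discrete predictable compensators with respect to the natural filtration. Then E[sup_{t∈θ_n} ((B^H)^{θ_n}_t − A^{θ_n}_t)²] ≤ 4 T |θ_n|^{2H−1}, which tends to 0. -/
/-!
Sampled at the partition points, `B` minus its compensator is the martingale part `M` of the Doob
decomposition of the sampled process. Doob's L² maximal inequality bounds `E[max_k M_k²]` by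
`4 E[M_N²]`; by orthogonality of martingale increments `E[M_N²] = ∑ E[(ΔM)²]`, and each `ΔM` is
`ΔB` minus its L² projection onto the past, so `E[(ΔM)²] ≤ E[(ΔB)²] = (Δt)^{2H} ≤ Δt |θ|^{2H-1}`.
The increments `Δt` add up to `T`.

Doob's inequality is proved pathwise: for the running maximum `S` of a sequence `y`,
`S_n² + 2 ∑ S_k (y_{k+1} - y_k) ≤ 2 y_n S_n`, and for a nonnegative submartingale `y = |M|` the
sum has nonnegative expectation since `S_k` is known at time `k`.
-/

open MeasureTheory Finset Filter

lemma monotone_apply_min_of_le_succ {α : Type*} [Preorder α] {s : ℕ → α} {N : ℕ}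
    (hs : ∀ k < N, s k ≤ s (k + 1)) : Monotone fun k => s (min k N) := by
  refine monotone_nat_of_le_succ fun k => ?_
  rcases lt_or_ge k N with hk | hk
  · rw [min_eq_left hk.le, min_eq_left hk]
    exact hs k hk
  · rw [min_eq_right hk, min_eq_right (hk.trans k.le_succ)]

lemma rpow_le_mul_rpow_sub_one {x δ p : ℝ} (hx : 0 ≤ x) (hxδ : x ≤ δ) (hp : 1 ≤ p) :
    x ^ p ≤ x * δ ^ (p - 1) := by
  rcases hx.eq_or_lt with rfl | hx
  · rw [Real.zero_rpow (by linarith), zero_mul]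
  · calc x ^ p = x * x ^ (p - 1) := by
          rw [← Real.rpow_one_add' hx.le (by linarith), add_sub_cancel]
      _ ≤ x * δ ^ (p - 1) := by gcongr

lemma sum_rpow_sub_le {s : ℕ → ℝ} {N : ℕ} {δ p : ℝ} (hp : 1 ≤ p)
    (hs : ∀ k < N, s k ≤ s (k + 1)) (hδ : ∀ k < N, s (k + 1) - s k ≤ δ) :
    ∑ k ∈ range N, (s (k + 1) - s k) ^ p ≤ (s N - s 0) * δ ^ (p - 1) :=
  calc ∑ k ∈ range N, (s (k + 1) - s k) ^ p
      ≤ ∑ k ∈ range N, (s (k + 1) - s k) * δ ^ (p - 1) := sum_le_sum fun k hk =>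
        rpow_le_mul_rpow_sub_one (sub_nonneg.2 (hs k (mem_range.1 hk))) (hδ k (mem_range.1 hk)) hp
    _ = (s N - s 0) * δ ^ (p - 1) := by rw [← sum_mul, sum_range_sub]

lemma partialSups_sq_add_sum_le (y : ℕ → ℝ) (n : ℕ) :
    partialSups y n ^ 2 + 2 * ∑ k ∈ range n, partialSups y k * (y (k + 1) - y k) ≤
      2 * y n * partialSups y n := by
  induction n with
  | zero => simp only [partialSups_zero, range_zero, sum_empty]; nlinarith [sq_nonneg (y 0)]
  | succ n ih =>
    rw [sum_range_succ, show partialSups y (n + 1) = partialSups y n ⊔ y (n + 1) from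
      partialSups_succ y n]
    rcases le_total (partialSups y n) (y (n + 1)) with h | h
    · rw [sup_eq_right.mpr h]
      nlinarith [sq_nonneg (partialSups y n - y (n + 1))]
    · rw [sup_eq_left.mpr h]
      nlinarith

lemma sq_partialSups_le (y : ℕ → ℝ) (n : ℕ) :
    partialSups y n ^ 2 ≤
      4 * y n ^ 2 - 4 * ∑ k ∈ range n, partialSups y k * (y (k + 1) - y k) := by
  nlinarith [partialSups_sq_add_sum_le y n, sq_nonneg (partialSups y n - 2 * y n)]

lemma sup'_range_sq_le_sq_partialSups_abs (x : ℕ → ℝ) (N : ℕ) :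
    (range (N + 1)).sup' nonempty_range_add_one (fun k => x k ^ 2) ≤
      partialSups (fun k => |x k|) N ^ 2 :=
  sup'_le _ _ fun k hk => by
    rw [← sq_abs]
    exact pow_le_pow_left₀ (abs_nonneg _)
      (le_partialSups_of_le (fun k => |x k|) (Nat.lt_succ_iff.mp (mem_range.mp hk))) 2

namespace MeasureTheory

variable {Ω : Type*} {m m0 : MeasurableSpace Ω} {μ : Measure Ω}

def Filtration.comp {ι κ : Type*} [Preorder ι] [Preorder κ] (ℱ : Filtration ι m0) (τ : κ →o ι) :
    Filtration κ m0 where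
  seq k := ℱ (τ k)
  mono' _ _ h := ℱ.mono (τ.monotone h)
  le' k := ℱ.le (τ k)

lemma integral_add_sq_of_integral_mul_eq_zero {f g : Ω → ℝ} (hf : MemLp f 2 μ)
    (hg : MemLp g 2 μ) (hfg : ∫ ω, f ω * g ω ∂μ = 0) :
    ∫ ω, (f ω + g ω) ^ 2 ∂μ = ∫ ω, f ω ^ 2 ∂μ + ∫ ω, g ω ^ 2 ∂μ := by
  have hsq : Integrable (fun ω => f ω ^ 2 + g ω ^ 2) μ := hf.integrable_sq.add hg.integrable_sq
  have hfg_int : Integrable (fun ω => 2 * (f ω * g ω)) μ := (hf.integrable_mul hg).const_mul 2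
  calc ∫ ω, (f ω + g ω) ^ 2 ∂μ = ∫ ω, (f ω ^ 2 + g ω ^ 2 + 2 * (f ω * g ω)) ∂μ := by
        congr 1; ext ω; ring
    _ = ∫ ω, f ω ^ 2 ∂μ + ∫ ω, g ω ^ 2 ∂μ := by
        rw [integral_add hsq hfg_int,
          integral_add hf.integrable_sq hg.integrable_sq, integral_const_mul, hfg, mul_zero,
          add_zero]

section Discrete

variable {ℱ : Filtration ℕ m0} {Y : ℕ → Ω → ℝ}

lemma martingalePart_add_one_sub (f : ℕ → Ω → ℝ) (k : ℕ) :
    martingalePart f ℱ μ (k + 1) - martingalePart f ℱ μ k =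
      f (k + 1) - f k - μ[f (k + 1) - f k|ℱ k] := by
  simp only [martingalePart, predictablePart_add_one]
  abel

lemma memLp_martingalePart {f : ℕ → Ω → ℝ} (hf2 : ∀ k, MemLp (f k) 2 μ) (n : ℕ) :
    MemLp (martingalePart f ℱ μ n) 2 μ :=
  (hf2 n).sub (memLp_finsetSum' _ fun k _ => ((hf2 (k + 1)).sub (hf2 k)).condExp one_le_two)

lemma stronglyAdapted_partialSups (hY : StronglyAdapted ℱ Y) :
    StronglyAdapted ℱ (partialSups Y) := by
  intro n
  induction n with
  | zero => simpa using hY 0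
  | succ n ih =>
    rw [show partialSups Y (n + 1) = partialSups Y n ⊔ Y (n + 1) from partialSups_succ Y n]
    exact @StronglyMeasurable.sup _ _ _ _ (ℱ (n + 1)) _ _ _ (ih.mono (ℱ.mono n.le_succ)) (hY _)

lemma memLp_partialSups {p : ENNReal} (hY : ∀ k, MemLp (Y k) p μ) (n : ℕ) :
    MemLp (partialSups Y n) p μ := by
  induction n with
  | zero => simpa using hY 0
  | succ n ih =>
    rw [show partialSups Y (n + 1) = partialSups Y n ⊔ Y (n + 1) from partialSups_succ Y n]
    exact ih.sup (hY (n + 1))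

end Discrete

variable [IsFiniteMeasure μ]

lemma condExp_sub_condExp_eq_zero (hm : m ≤ m0) {f : Ω → ℝ} (hf : Integrable f μ) :
    μ[f - μ[f|m]|m] =ᵐ[μ] 0 := by
  filter_upwards [condExp_sub hf integrable_condExp m] with ω hω
  rw [hω, condExp_of_stronglyMeasurable hm stronglyMeasurable_condExp integrable_condExp,
    Pi.sub_apply, sub_self, Pi.zero_apply]

lemma integral_mul_condExp (hm : m ≤ m0) {f g : Ω → ℝ} (hg : StronglyMeasurable[m] g)
    (hg2 : MemLp g 2 μ) (hf : MemLp f 2 μ) :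
    ∫ ω, g ω * (μ[f|m]) ω ∂μ = ∫ ω, g ω * f ω ∂μ :=
  calc ∫ ω, g ω * (μ[f|m]) ω ∂μ = ∫ ω, (μ[g * f|m]) ω ∂μ :=
        integral_congr_ae (condExp_mul_of_stronglyMeasurable_left hg
          (hg2.integrable_mul hf) (hf.integrable one_le_two)).symm
    _ = ∫ ω, g ω * f ω ∂μ := integral_condExp hm

lemma integral_mul_eq_zero_of_condExp_eq_zero (hm : m ≤ m0) {f g : Ω → ℝ}
    (hg : StronglyMeasurable[m] g) (hg2 : MemLp g 2 μ) (hf : MemLp f 2 μ)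
    (hf0 : μ[f|m] =ᵐ[μ] 0) : ∫ ω, g ω * f ω ∂μ = 0 := by
  rw [← integral_mul_condExp hm hg hg2 hf, integral_eq_zero_of_ae]
  filter_upwards [hf0] with ω hω
  simp [hω]

lemma integral_sq_sub_condExp_le (hm : m ≤ m0) {f : Ω → ℝ} (hf : MemLp f 2 μ) :
    ∫ ω, (f ω - (μ[f|m]) ω) ^ 2 ∂μ ≤ ∫ ω, f ω ^ 2 ∂μ := by
  have hc : MemLp (μ[f|m]) 2 μ := hf.condExp one_le_two
  have horth := integral_add_sq_of_integral_mul_eq_zero hc (hf.sub hc)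
    (integral_mul_eq_zero_of_condExp_eq_zero hm stronglyMeasurable_condExp hc (hf.sub hc)
      (condExp_sub_condExp_eq_zero hm (hf.integrable one_le_two)))
  simp only [Pi.sub_apply, add_sub_cancel] at horth
  rw [horth]
  exact le_add_of_nonneg_left (integral_nonneg fun ω => sq_nonneg _)

section Discrete

variable {ℱ : Filtration ℕ m0} {Y : ℕ → Ω → ℝ}

lemma Martingale.condExp_succ_sub_eq_zero {M : ℕ → Ω → ℝ} (hM : Martingale M ℱ μ) (k : ℕ) :
    μ[M (k + 1) - M k|ℱ k] =ᵐ[μ] 0 := by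
  filter_upwards [condExp_sub (hM.integrable (k + 1)) (hM.integrable k) (ℱ k),
    hM.condExp_ae_eq k.le_succ] with ω hsub hmart
  rw [hsub, Pi.sub_apply, hmart, condExp_of_stronglyMeasurable (ℱ.le k) (hM.stronglyMeasurable k)
    (hM.integrable k), sub_self, Pi.zero_apply]

lemma Martingale.integral_sq_eq_add_sum {M : ℕ → Ω → ℝ} (hM : Martingale M ℱ μ)
    (hM2 : ∀ k, MemLp (M k) 2 μ) (n : ℕ) :
    ∫ ω, M n ω ^ 2 ∂μ =
      ∫ ω, M 0 ω ^ 2 ∂μ + ∑ k ∈ range n, ∫ ω, (M (k + 1) ω - M k ω) ^ 2 ∂μ := by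
  induction n with
  | zero => simp
  | succ n ih =>
    have hΔ : MemLp (M (n + 1) - M n) 2 μ := (hM2 (n + 1)).sub (hM2 n)
    have hpyth := integral_add_sq_of_integral_mul_eq_zero (hM2 n) hΔ
      (integral_mul_eq_zero_of_condExp_eq_zero (ℱ.le n) (hM.stronglyMeasurable n) (hM2 n) hΔ
        (hM.condExp_succ_sub_eq_zero n))
    simp only [Pi.sub_apply, add_sub_cancel] at hpyth
    rw [hpyth, ih, sum_range_succ, add_assoc]

lemma integral_sq_martingalePart_le {f : ℕ → Ω → ℝ} (hf : StronglyAdapted ℱ f)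
    (hf2 : ∀ k, MemLp (f k) 2 μ) (n : ℕ) :
    ∫ ω, martingalePart f ℱ μ n ω ^ 2 ∂μ ≤
      ∫ ω, f 0 ω ^ 2 ∂μ + ∑ k ∈ range n, ∫ ω, (f (k + 1) ω - f k ω) ^ 2 ∂μ := by
  have hM := martingale_martingalePart (μ := μ) hf fun k => (hf2 k).integrable one_le_two
  rw [hM.integral_sq_eq_add_sum (memLp_martingalePart hf2) n, martingalePart_zero]
  refine add_le_add le_rfl (sum_le_sum fun k _ => ?_)
  have hinc := congrFun (martingalePart_add_one_sub (μ := μ) (ℱ := ℱ) f k)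
  simp only [Pi.sub_apply] at hinc
  simp only [hinc]
  exact integral_sq_sub_condExp_le (ℱ.le k) ((hf2 (k + 1)).sub (hf2 k))

theorem Submartingale.integral_sq_partialSups_le (hY : Submartingale Y ℱ μ) (hY0 : 0 ≤ Y)
    (hY2 : ∀ k, MemLp (Y k) 2 μ) (n : ℕ) :
    ∫ ω, partialSups Y n ω ^ 2 ∂μ ≤ 4 * ∫ ω, Y n ω ^ 2 ∂μ := by
  set S := partialSups Y
  have hS2 : ∀ k, MemLp (S k) 2 μ := memLp_partialSups hY2
  have hdrift_int : ∀ k, Integrable (fun ω => S k ω * (Y (k + 1) ω - Y k ω)) μ :=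
    fun k => (hS2 k).integrable_mul ((hY2 (k + 1)).sub (hY2 k))
  have hdrift_nonneg : ∀ k, 0 ≤ ∫ ω, S k ω * (Y (k + 1) ω - Y k ω) ∂μ := by
    intro k
    refine (integral_nonneg_of_ae ?_).trans_eq (integral_mul_condExp (ℱ.le k)
      (stronglyAdapted_partialSups hY.stronglyAdapted k) (hS2 k) ((hY2 (k + 1)).sub (hY2 k)))
    filter_upwards [hY.condExp_sub_nonneg k.le_succ] with ω hω
    exact mul_nonneg ((hY0 0 ω).trans (le_partialSups_of_le Y k.zero_le ω)) hω
  calc ∫ ω, S n ω ^ 2 ∂μ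
      ≤ ∫ ω, (4 * Y n ω ^ 2 - 4 * ∑ k ∈ range n, S k ω * (Y (k + 1) ω - Y k ω)) ∂μ := by
        refine integral_mono (hS2 n).integrable_sq (((hY2 n).integrable_sq.const_mul 4).sub
          ((integrable_finsetSum _ fun k _ => hdrift_int k).const_mul 4)) fun ω => ?_
        simpa only [S, Pi.partialSups_apply] using sq_partialSups_le (Y · ω) n
    _ = 4 * ∫ ω, Y n ω ^ 2 ∂μ - 4 * ∑ k ∈ range n, ∫ ω, S k ω * (Y (k + 1) ω - Y k ω) ∂μ := by
        rw [integral_sub ((hY2 n).integrable_sq.const_mul 4)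
          ((integrable_finsetSum _ fun k _ => hdrift_int k).const_mul 4),
          integral_const_mul, integral_const_mul, integral_finsetSum _ fun k _ => hdrift_int k]
    _ ≤ 4 * ∫ ω, Y n ω ^ 2 ∂μ := by
        have := sum_nonneg fun k (_ : k ∈ range n) => hdrift_nonneg k
        linarith

theorem integral_sq_partialSups_abs_martingalePart_le {f : ℕ → Ω → ℝ} (hf : StronglyAdapted ℱ f)
    (hf2 : ∀ k, MemLp (f k) 2 μ) (n : ℕ) :
    ∫ ω, partialSups (fun k => |martingalePart f ℱ μ k|) n ω ^ 2 ∂μ ≤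
      4 * (∫ ω, f 0 ω ^ 2 ∂μ + ∑ k ∈ range n, ∫ ω, (f (k + 1) ω - f k ω) ^ 2 ∂μ) := by
  have hM := martingale_martingalePart (μ := μ) hf fun k => (hf2 k).integrable one_le_two
  have hM2 := memLp_martingalePart (ℱ := ℱ) (μ := μ) hf2
  calc ∫ ω, partialSups (fun k => |martingalePart f ℱ μ k|) n ω ^ 2 ∂μ
      ≤ 4 * ∫ ω, |martingalePart f ℱ μ n| ω ^ 2 ∂μ :=
        (hM.submartingale.sup hM.neg.submartingale).integral_sq_partialSups_le
          (fun k ω => abs_nonneg _) (fun k => (hM2 k).abs) n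
    _ ≤ 4 * (∫ ω, f 0 ω ^ 2 ∂μ + ∑ k ∈ range n, ∫ ω, (f (k + 1) ω - f k ω) ^ 2 ∂μ) := by
        simp only [Pi.abs_apply, sq_abs]
        gcongr
        exact integral_sq_martingalePart_le hf hf2 n

end Discrete

theorem integral_sup'_sq_sub_compensator_le {ℱ : Filtration ℝ m0} {B : ℝ → Ω → ℝ}
    (hB_sq : ∀ u, 0 ≤ u → MemLp (B u) 2 μ)
    (hB_adapted : ∀ u, 0 ≤ u → StronglyMeasurable[ℱ u] (B u))
    {s : ℕ → ℝ} {N : ℕ} (hs0 : 0 ≤ s 0) (hs : ∀ k < N, s k ≤ s (k + 1)) {A : ℕ → Ω → ℝ}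
    (hA : ∀ k, A k = fun ω => ∑ j ∈ range k, (μ[B (s (j + 1)) - B (s j)|ℱ (s j)]) ω) :
    ∫ ω, (range (N + 1)).sup' nonempty_range_add_one (fun k => (B (s k) ω - A k ω) ^ 2) ∂μ ≤
      4 * (∫ ω, B (s 0) ω ^ 2 ∂μ +
        ∑ k ∈ range N, ∫ ω, (B (s (k + 1)) ω - B (s k) ω) ^ 2 ∂μ) := by
  -- Freezing the times after `N` turns the sampled σ-algebras into a filtration indexed by `ℕ`.
  let τ : ℕ →o ℝ := ⟨fun k => s (min k N), monotone_apply_min_of_le_succ hs⟩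
  have hτ : ∀ k ≤ N, τ k = s k := fun k hk => congrArg s (min_eq_left hk)
  have hτ0 : ∀ k, 0 ≤ τ k := fun k => (hτ 0 N.zero_le ▸ hs0).trans (τ.monotone k.zero_le)
  set X : ℕ → Ω → ℝ := fun k => B (τ k)
  have hX : StronglyAdapted (ℱ.comp τ) X := fun k => hB_adapted _ (hτ0 k)
  have hX2 : ∀ k, MemLp (X k) 2 μ := fun k => hB_sq _ (hτ0 k)
  set M := martingalePart X (ℱ.comp τ) μ
  have hAM : ∀ k ≤ N, ∀ ω, B (s k) ω - A k ω = M k ω := by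
    intro k hk ω
    simp only [M, martingalePart, predictablePart, hA, Pi.sub_apply, Finset.sum_apply, X, hτ k hk]
    congr 1
    refine sum_congr rfl fun j hj => ?_
    have hj : j < k := mem_range.mp hj
    change _ = (μ[B (τ (j + 1)) - B (τ j)|ℱ (τ j)]) ω
    rw [hτ j (by omega), hτ (j + 1) (by omega)]
  calc ∫ ω, (range (N + 1)).sup' nonempty_range_add_one (fun k => (B (s k) ω - A k ω) ^ 2) ∂μ
      ≤ ∫ ω, partialSups (fun k => |M k|) N ω ^ 2 ∂μ := by
        refine integral_mono_of_nonneg (ae_of_all _ fun ω => (sq_nonneg _).trans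
            (le_sup' (fun k => (B (s k) ω - A k ω) ^ 2) (mem_range.2 N.succ_pos)))
          (memLp_partialSups (fun k => (memLp_martingalePart hX2 k).abs) N).integrable_sq
          (ae_of_all _ fun ω => ?_)
        dsimp only
        rw [sup'_congr _ rfl fun k hk => by rw [hAM k (Nat.lt_succ_iff.mp (mem_range.mp hk)) ω]]
        simpa only [Pi.partialSups_apply, Pi.abs_apply] using
          sup'_range_sq_le_sq_partialSups_abs (M · ω) N
    _ ≤ 4 * (∫ ω, X 0 ω ^ 2 ∂μ + ∑ k ∈ range N, ∫ ω, (X (k + 1) ω - X k ω) ^ 2 ∂μ) :=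
        integral_sq_partialSups_abs_martingalePart_le hX hX2 N
    _ = 4 * (∫ ω, B (s 0) ω ^ 2 ∂μ +
          ∑ k ∈ range N, ∫ ω, (B (s (k + 1)) ω - B (s k) ω) ^ 2 ∂μ) := by
        refine congrArg _ (congrArg₂ _ (by simp only [X, hτ 0 N.zero_le])
          (sum_congr rfl fun k hk => ?_))
        have hk := mem_range.mp hk
        simp only [X, hτ k hk.le, hτ (k + 1) hk]

end MeasureTheory

/-- For `H ∈ (1/2,1)` and partitions `θ_n` with mesh tending to `0`, the compensated
discretization of a fractional Brownian motion satisfies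
`E[sup_{t ∈ θ_n} ((B^H)^{θ_n}_t - A^{θ_n}_t)²] ≤ 4 T |θ_n|^{2H-1} → 0`. -/
theorem fBm_sup_compensated_bound
    {Ω : Type*} {m0 : MeasurableSpace Ω} (μ : Measure Ω) [IsProbabilityMeasure μ]
    (H : ℝ) (hH : H ∈ Set.Ioo (1 / 2 : ℝ) 1)
    (ℱ : ℝ → MeasurableSpace Ω) (hℱ_le : ∀ r, ℱ r ≤ m0)
    (hℱ_mono : ∀ r u : ℝ, r ≤ u → ℱ r ≤ ℱ u)
    (B : ℝ → Ω → ℝ)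
    (hB_sq : ∀ u : ℝ, 0 ≤ u → MemLp (B u) 2 μ)
    (hB_adapted : ∀ u : ℝ, 0 ≤ u → StronglyMeasurable[ℱ u] (B u))
    (hB0 : B 0 =ᵐ[μ] 0)
    (hB_var : ∀ u v : ℝ, 0 ≤ u → u ≤ v →
      ∫ ω, (B v ω - B u ω) ^ 2 ∂μ = (v - u) ^ (2 * H))
    (T : ℝ)
    (K : ℕ → ℕ) (hK : ∀ n, 0 < K n)
    (t : ℕ → ℕ → ℝ) (ht0 : ∀ n, t n 0 = 0) (htK : ∀ n, t n (K n) = T)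
    (ht_mono : ∀ n, ∀ k < K n, t n k < t n (k + 1))
    (mesh : ℕ → ℝ)
    (hmesh : ∀ n, mesh n = (Finset.range (K n)).sup'
      (by simp [Nat.pos_iff_ne_zero.mp (hK n)]) (fun k => t n (k + 1) - t n k))
    (hmesh0 : Tendsto mesh atTop (nhds 0))
    (A : ℕ → ℕ → Ω → ℝ)
    (hA : ∀ n k, A n k = fun ω =>
      ∑ j ∈ Finset.range k, (μ[B (t n (j + 1)) - B (t n j) | ℱ (t n j)]) ω) :
    (∀ n, ∫ ω, (Finset.range (K n + 1)).sup' (by simp)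
        (fun k => (B (t n k) ω - A n k ω) ^ 2) ∂μ
      ≤ 4 * T * mesh n ^ (2 * H - 1)) ∧
    Tendsto (fun n => 4 * T * mesh n ^ (2 * H - 1)) atTop (nhds 0) := by
  obtain ⟨hH1, -⟩ := hH
  let ℱ' : Filtration ℝ m0 := ⟨ℱ, fun r u h => hℱ_mono r u h, hℱ_le⟩
  refine ⟨fun n => ?_, ?_⟩
  · have hmono : ∀ k < K n, t n k ≤ t n (k + 1) := fun k hk => (ht_mono n k hk).le
    have hnonneg : ∀ k < K n, 0 ≤ t n k := fun k hk => by
      simpa [min_eq_left hk.le, ht0 n] using monotone_apply_min_of_le_succ hmono k.zero_le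
    have hB0_sq : ∫ ω, B 0 ω ^ 2 ∂μ = 0 :=
      integral_eq_zero_of_ae (by filter_upwards [hB0] with ω hω; simp [hω])
    calc _ ≤ 4 * (∫ ω, B (t n 0) ω ^ 2 ∂μ +
          ∑ k ∈ range (K n), ∫ ω, (B (t n (k + 1)) ω - B (t n k) ω) ^ 2 ∂μ) :=
          integral_sup'_sq_sub_compensator_le (ℱ := ℱ') hB_sq hB_adapted (ht0 n).ge hmono (hA n)
      _ = 4 * ∑ k ∈ range (K n), (t n (k + 1) - t n k) ^ (2 * H) := by
          rw [ht0 n, hB0_sq, zero_add]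
          exact congrArg _ (sum_congr rfl fun k hk =>
            hB_var _ _ (hnonneg k (mem_range.1 hk)) (hmono k (mem_range.1 hk)))
      _ ≤ 4 * ((t n (K n) - t n 0) * mesh n ^ (2 * H - 1)) := by
          gcongr
          exact sum_rpow_sub_le (by linarith) hmono fun k hk =>
            hmesh n ▸ le_sup' (fun k => t n (k + 1) - t n k) (mem_range.2 hk)
      _ = 4 * T * mesh n ^ (2 * H - 1) := by rw [htK, ht0, sub_zero, mul_assoc]
  · have hrpow := Real.continuousAt_rpow_const 0 (2 * H - 1) (Or.inr (by linarith))
    simpa [Real.zero_rpow (by linarith : 2 * H - 1 ≠ 0)] using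
      (hrpow.tendsto.comp hmesh0).const_mul (4 * T)
end

section
/- For the covariance function R(t,s) = ½(t^{2H} + s^{2H} − |t−s|^{2H}) with H ∈ (0,1), R is symmetric and positive semidefinite on [0,∞): for all n, all t_1,…,t_n ≥ 0, and all real a_1,…,a_n, Σ_{i,j} a_i a_j R(t_i,t_j) ≥ 0. -/
/-!
For `0 < p < 2` the substitution `v = |x| u` gives
`∫₀^∞ (1 - cos (x u)) u^(-1-p) du = c_p |x|^p` with `0 < c_p < ∞`. Hence
`|s|^p + |t|^p - |s - t|^p` is `c_p⁻¹` times the integral against `u^(-1-p) du` of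
`(1 - cos (s u)) + (1 - cos (t u)) - (1 - cos ((s - t) u))
  = (1 - cos (s u)) (1 - cos (t u)) + sin (s u) sin (t u)`,
a positive semidefinite kernel for every `u`. Take `p = 2H`.
-/

open MeasureTheory Real Set Finset

variable {p : ℝ}

lemma integrableOn_one_sub_cos_mul_mul_rpow (hp0 : 0 < p) (hp2 : p < 2) (x : ℝ) :
    IntegrableOn (fun u => (1 - cos (x * u)) * u ^ (-1 - p)) (Ioi 0) := by
  have hmeas : ∀ s : Set ℝ,
      AEStronglyMeasurable (fun u => (1 - cos (x * u)) * u ^ (-1 - p)) (volume.restrict s) :=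
    fun s => by fun_prop
  have near_zero : IntegrableOn (fun u => (1 - cos (x * u)) * u ^ (-1 - p)) (Ioc 0 1) := by
    have hg : IntegrableOn (fun u => x ^ 2 / 2 * u ^ (1 - p)) (Ioc 0 1) :=
      ((intervalIntegrable_iff_integrableOn_Ioc_of_le zero_le_one).mp
        (intervalIntegral.intervalIntegrable_rpow' (by linarith))).const_mul _
    refine hg.mono' (hmeas _) ?_
    filter_upwards [ae_restrict_mem measurableSet_Ioc] with u ⟨hu0, _⟩
    have hcos : 1 - cos (x * u) ≤ (x * u) ^ 2 / 2 := by
      linarith [one_sub_sq_div_two_le_cos (x := x * u)]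
    have hpow : u ^ (1 - p) = u ^ 2 * u ^ (-1 - p) := by
      rw [← rpow_natCast, ← rpow_add hu0]; norm_num; ring_nf
    rw [norm_of_nonneg (by have := cos_le_one (x * u); positivity), hpow]
    calc (1 - cos (x * u)) * u ^ (-1 - p) ≤ (x * u) ^ 2 / 2 * u ^ (-1 - p) := by gcongr
      _ = x ^ 2 / 2 * (u ^ 2 * u ^ (-1 - p)) := by ring
  have near_infty : IntegrableOn (fun u => (1 - cos (x * u)) * u ^ (-1 - p)) (Ioi 1) := by
    have hg : IntegrableOn (fun u : ℝ => 2 * u ^ (-1 - p)) (Ioi 1) :=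
      (integrableOn_Ioi_rpow_of_lt (a := -1 - p) (by linarith) one_pos).const_mul 2
    refine hg.mono' (hmeas _) ?_
    filter_upwards [ae_restrict_mem measurableSet_Ioi] with u hu
    have hu0 : 0 ≤ u ^ (-1 - p) := rpow_nonneg (zero_le_one.trans hu.le) _
    rw [norm_of_nonneg (by have := cos_le_one (x * u); positivity)]
    gcongr
    linarith [neg_one_le_cos (x * u)]
  simpa [Ioc_union_Ioi_eq_Ioi zero_le_one] using near_zero.union near_infty

lemma integral_one_sub_cos_mul_rpow_pos (hp0 : 0 < p) (hp2 : p < 2) :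
    0 < ∫ u in Ioi 0, (1 - cos u) * u ^ (-1 - p) := by
  have hint := integrableOn_one_sub_cos_mul_mul_rpow hp0 hp2 1
  simp only [one_mul] at hint
  rw [setIntegral_pos_iff_support_of_nonneg_ae ?_ hint]
  · refine (measure_mono (?_ : Ioo 0 π ⊆ _)).trans_lt' (by simp [pi_pos])
    rintro u ⟨hu0, huπ⟩
    have hcos : cos u < 1 := by
      simpa using cos_lt_cos_of_nonneg_of_le_pi le_rfl huπ.le hu0
    exact ⟨(mul_pos (by linarith) (rpow_pos_of_pos hu0 _)).ne', hu0⟩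
  · filter_upwards [ae_restrict_mem measurableSet_Ioi] with u hu
    have := cos_le_one u
    have := rpow_nonneg (le_of_lt hu) (-1 - p)
    simp only [Pi.zero_apply]
    positivity

lemma integral_one_sub_cos_mul_mul_rpow (hp0 : 0 < p) (x : ℝ) :
    ∫ u in Ioi 0, (1 - cos (x * u)) * u ^ (-1 - p)
      = |x| ^ p * ∫ u in Ioi 0, (1 - cos u) * u ^ (-1 - p) := by
  have hcos_abs : ∀ u, cos (x * u) = cos (|x| * u) := fun u => by
    rcases abs_choice x with h | h <;> simp [h]
  simp only [hcos_abs]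
  rcases (abs_nonneg x).eq_or_lt with hx | hx
  · simp [← hx, zero_rpow hp0.ne']
  have hscale : ∀ u ∈ Ioi (0 : ℝ), (1 - cos (|x| * u)) * u ^ (-1 - p)
      = |x| ^ (1 + p) * ((1 - cos (|x| * u)) * (|x| * u) ^ (-1 - p)) := fun u hu => by
    rw [mul_rpow hx.le (le_of_lt hu), mul_left_comm, ← mul_assoc (|x| ^ (1 + p)),
      ← rpow_add hx]
    norm_num
  rw [setIntegral_congr_fun measurableSet_Ioi hscale, integral_const_mul,
    integral_comp_mul_left_Ioi (fun v => (1 - cos v) * v ^ (-1 - p)) 0 hx, mul_zero, smul_eq_mul,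
    ← mul_assoc, ← rpow_neg_one, ← rpow_add hx]
  ring_nf

variable {ι : Type*} [Fintype ι]

lemma sum_sum_mul_mul_one_sub_cos_nonneg (a t : ι → ℝ) (u : ℝ) :
    0 ≤ ∑ i, ∑ j, a i * a j *
      ((1 - cos (t i * u)) + (1 - cos (t j * u)) - (1 - cos ((t i - t j) * u))) := by
  have hkernel : ∀ i j, a i * a j *
      ((1 - cos (t i * u)) + (1 - cos (t j * u)) - (1 - cos ((t i - t j) * u)))
        = a i * (1 - cos (t i * u)) * (a j * (1 - cos (t j * u)))
          + a i * sin (t i * u) * (a j * sin (t j * u)) := fun i j => by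
    rw [sub_mul, cos_sub]
    ring
  simp only [hkernel, sum_add_distrib, ← sum_mul_sum]
  exact add_nonneg (mul_self_nonneg _) (mul_self_nonneg _)

theorem sum_sum_mul_mul_abs_rpow_add_abs_rpow_sub_abs_rpow_nonneg (hp0 : 0 < p) (hp2 : p < 2)
    (a t : ι → ℝ) :
    0 ≤ ∑ i, ∑ j, a i * a j * (|t i| ^ p + |t j| ^ p - |t i - t j| ^ p) := by
  set φ : ℝ → ℝ → ℝ := fun x u => (1 - cos (x * u)) * u ^ (-1 - p) with hφ
  have hφint (x : ℝ) : IntegrableOn (φ x) (Ioi 0) :=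
    integrableOn_one_sub_cos_mul_mul_rpow hp0 hp2 x
  have hint (i j : ι) :
      IntegrableOn (fun u => a i * a j * (φ (t i) u + φ (t j) u - φ (t i - t j) u)) (Ioi 0) :=
    (((hφint _).add (hφint _)).sub (hφint _)).const_mul _
  refine nonneg_of_mul_nonneg_right ?_ (integral_one_sub_cos_mul_rpow_pos hp0 hp2)
  calc 0 ≤ ∫ u in Ioi 0, ∑ i, ∑ j,
        a i * a j * (φ (t i) u + φ (t j) u - φ (t i - t j) u) := by
        refine setIntegral_nonneg measurableSet_Ioi fun u hu => ?_
        have hfactor : ∑ i, ∑ j, a i * a j * (φ (t i) u + φ (t j) u - φ (t i - t j) u)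
            = (∑ i, ∑ j, a i * a j *
                ((1 - cos (t i * u)) + (1 - cos (t j * u)) - (1 - cos ((t i - t j) * u))))
              * u ^ (-1 - p) := by
          simp only [hφ, sum_mul]
          exact sum_congr rfl fun i _ => sum_congr rfl fun j _ => by ring
        rw [hfactor]
        exact mul_nonneg (sum_sum_mul_mul_one_sub_cos_nonneg a t u)
          (rpow_nonneg (le_of_lt hu) _)
    _ = ∑ i, ∑ j, a i * a j *
          ((∫ u in Ioi 0, φ (t i) u) + (∫ u in Ioi 0, φ (t j) u)
            - ∫ u in Ioi 0, φ (t i - t j) u) := by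
        rw [integral_finsetSum _ fun i _ => integrable_finsetSum _ fun j _ => hint i j]
        refine sum_congr rfl fun i _ => ?_
        rw [integral_finsetSum _ fun j _ => hint i j]
        refine sum_congr rfl fun j _ => ?_
        rw [integral_const_mul,
          integral_sub (f := fun u => φ (t i) u + φ (t j) u) ((hφint _).add (hφint _))
            (hφint _),
          integral_add (hφint _) (hφint _)]
    _ = _ := by
        simp only [hφ, integral_one_sub_cos_mul_mul_rpow hp0, mul_sum]
        exact sum_congr rfl fun i _ => sum_congr rfl fun j _ => by ring

/-- The fBm covariance `R(t,s) = ½(t^{2H} + s^{2H} - |t-s|^{2H})`, `H ∈ (0,1)`, is a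
symmetric positive semidefinite kernel on `[0,∞)`. -/
theorem fBm_covariance_posSemidef
    (H : ℝ) (hH : H ∈ Set.Ioo (0 : ℝ) 1)
    (R : ℝ → ℝ → ℝ)
    (hR : ∀ u v : ℝ, R u v = (u ^ (2 * H) + v ^ (2 * H) - |u - v| ^ (2 * H)) / 2) :
    (∀ u v : ℝ, 0 ≤ u → 0 ≤ v → R u v = R v u) ∧
    (∀ (n : ℕ) (t : Fin n → ℝ) (a : Fin n → ℝ), (∀ i, 0 ≤ t i) →
      0 ≤ ∑ i : Fin n, ∑ j : Fin n, a i * a j * R (t i) (t j)) := by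
  refine ⟨fun u v _ _ => by rw [hR, hR, abs_sub_comm]; ring, fun n t a ht => ?_⟩
  have hpsd := sum_sum_mul_mul_abs_rpow_add_abs_rpow_sub_abs_rpow_nonneg (p := 2 * H)
    (by linarith [hH.1]) (by linarith [hH.2]) a t
  simp only [abs_of_nonneg (ht _)] at hpsd
  simp only [hR, mul_div_assoc', ← sum_div]
  exact div_nonneg hpsd zero_le_two
end
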